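/- arXiv:0904.2624 — 5 statements merged into one kernel-verified Lean document; each statement's English description precedes it below -/
import Mathlib

section
/- Let G be a group of bijections of a set X, let g ∈ G, and let U ⊆ X satisfy g(U) ∩ U = ∅. Then for any a, b ∈ G with support of a and support of b contained in U, the element g a g⁻¹ commutes with b, and hence [[g, a], b] = [a⁻¹, b]. In particular [a⁻¹, b] lies in the normal closure of g in G. -/
open scoped commutatorElement

/-- The commutator trick: if `g(U)` is disjoint from `U` and `a`, `b` are supported in `U`,
then `g a g⁻¹` commutes with `b`, hence `⁅⁅g, a⁆, b⁆ = ⁅a⁻¹, b⁆`, and in particular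
`⁅a⁻¹, b⁆` lies in the normal closure of `g` in `G`. -/
theorem stmt_5 {X : Type*} (G : Subgroup (Equiv.Perm X)) (g a b : G) (U : Set X)
    (hU : (g : Equiv.Perm X) '' U ∩ U = ∅)
    (ha : {x | (a : Equiv.Perm X) x ≠ x} ⊆ U)
    (hb : {x | (b : Equiv.Perm X) x ≠ x} ⊆ U) :
    Commute (g * a * g⁻¹) b ∧ ⁅⁅g, a⁆, b⁆ = ⁅a⁻¹, b⁆ ∧
      ⁅a⁻¹, b⁆ ∈ Subgroup.normalClosure ({g} : Set G) := by
  -- the conjugate g a g⁻¹ is the identity on U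
  have hc : ∀ x ∈ U, ((g : Equiv.Perm X) * a * (g : Equiv.Perm X)⁻¹) x = x := by
    intro x hx
    have hfix : (a : Equiv.Perm X) ((g : Equiv.Perm X)⁻¹ x) = (g : Equiv.Perm X)⁻¹ x := by
      by_contra h
      have hmem : (g : Equiv.Perm X)⁻¹ x ∈ U := ha h
      have : x ∈ (g : Equiv.Perm X) '' U ∩ U :=
        ⟨⟨(g : Equiv.Perm X)⁻¹ x, hmem, by simp⟩, hx⟩
      simp [hU] at this
    rw [Equiv.Perm.mul_apply, Equiv.Perm.mul_apply, hfix]; simp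
  have hcU : ∀ x ∈ U, (((g * a * g⁻¹ : G) : Equiv.Perm X)) x = x := by
    intro x hx
    simpa using hc x hx
  have hcb : Commute (g * a * g⁻¹) b := by
    have hdisj : (((g * a * g⁻¹ : G) : Equiv.Perm X)).Disjoint (b : Equiv.Perm X) := by
      intro x
      by_cases hx : x ∈ U
      · exact Or.inl (hcU x hx)
      · exact Or.inr (by by_contra h; exact hx (hb h))
    exact Subtype.ext (by simpa using hdisj.commute.eq)
  -- g a g⁻¹ also commutes with a⁻¹ * b * a, which is supported in U
  have hcab : Commute (g * a * g⁻¹) (a⁻¹ * b * a) := by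
    have hdisj : (((g * a * g⁻¹ : G) : Equiv.Perm X)).Disjoint
        ((a⁻¹ * b * a : G) : Equiv.Perm X) := by
      intro x
      by_cases hx : x ∈ U
      · exact Or.inl (hcU x hx)
      · refine Or.inr ?_
        have hax : (a : Equiv.Perm X) x = x := by
          by_contra h; exact hx (ha h)
        have hbx : (b : Equiv.Perm X) x = x := by
          by_contra h; exact hx (hb h)
        have hax' : ((a : Equiv.Perm X))⁻¹ x = x := by
          conv_lhs => rw [← hax]
          simp
        simp [Equiv.Perm.mul_apply, hax, hbx, hax']
    exact Subtype.ext (by simpa using hdisj.commute.eq)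
  refine ⟨hcb, ?_⟩
  have key : (g * a * g⁻¹) * (a⁻¹ * b * a) * (g * a * g⁻¹)⁻¹ = a⁻¹ * b * a := by
    rw [hcab.eq]; group
  have heq : ⁅⁅g, a⁆, b⁆ = ⁅a⁻¹, b⁆ := by
    simp only [commutatorElement_def]
    rw [show g * a * g⁻¹ * a⁻¹ * b * (g * a * g⁻¹ * a⁻¹)⁻¹ * b⁻¹ =
        ((g * a * g⁻¹) * (a⁻¹ * b * a) * (g * a * g⁻¹)⁻¹) * b⁻¹ by group, key]
    group
  refine ⟨heq, ?_⟩
  rw [← heq]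
  have hg : g ∈ Subgroup.normalClosure ({g} : Set G) :=
    Subgroup.subset_normalClosure (Set.mem_singleton g)
  have hnormal := Subgroup.normalClosure_normal (s := ({g} : Set G))
  have h1 : ⁅g, a⁆ ∈ Subgroup.normalClosure ({g} : Set G) := by
    rw [commutatorElement_def, mul_assoc, mul_assoc, ← mul_assoc a]
    exact mul_mem hg (hnormal.conj_mem g⁻¹ (inv_mem hg) a)
  rw [commutatorElement_def, mul_assoc, mul_assoc, ← mul_assoc b]
  exact mul_mem h1 (hnormal.conj_mem ⁅g, a⁆⁻¹ (inv_mem h1) b)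
end

section
/- Let N be a normal subgroup of a group G of bijections of a set X, let g ∈ N, and let V ⊆ X be such that g(V) ∩ V = ∅. Then for all a, b ∈ G with supports contained in V, the commutator [a, b] belongs to N. -/
/-!
Put `k = g a g⁻¹`. Its support `g(supp a)` lies in `g(V)`, which is disjoint from `V`, so `k`
commutes with every element supported in `V`, in particular with `a⁻¹ b a`. Hence
`⁅⁅g, a⁆, b⁆ = k (a⁻¹ b a) k⁻¹ b⁻¹ = ⁅a⁻¹, b⁆`. The left side lies in `N` because `N` is normal
and `g ∈ N`, and `⁅a, b⁆` is a conjugate of `⁅a⁻¹, b⁆⁻¹`.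
-/

open scoped commutatorElement Pointwise

open MulAction

theorem commutatorElement_mem_of_commute_conj {G : Type*} [Group G] {N : Subgroup G}
    (hN : N.Normal) {g a b : G} (hg : g ∈ N) (hcomm : Commute (g * a * g⁻¹) (a⁻¹ * b * a)) :
    ⁅a, b⁆ ∈ N := by
  have hga : ⁅g, a⁆ ∈ N := Subgroup.commutator_le_left N ⊤
    (Subgroup.commutator_mem_commutator hg (Subgroup.mem_top a))
  have hgab : ⁅⁅g, a⁆, b⁆ ∈ N := Subgroup.commutator_le_left N ⊤
    (Subgroup.commutator_mem_commutator hga (Subgroup.mem_top b))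
  have h_eq : ⁅⁅g, a⁆, b⁆ = ⁅a⁻¹, b⁆ := calc
    ⁅⁅g, a⁆, b⁆ = (g * a * g⁻¹) * (a⁻¹ * b * a) * (g * a * g⁻¹)⁻¹ * b⁻¹ := by group
    _ = ⁅a⁻¹, b⁆ := by rw [hcomm.eq]; group
  have h_conj : ⁅a, b⁆ = a * ⁅a⁻¹, b⁆⁻¹ * a⁻¹ := by group
  rw [h_conj, ← h_eq]
  exact hN.conj_mem _ (inv_mem hgab) a

section DisjointSupports

variable {G α : Type*} [Group G] [MulAction G α]

theorem smul_smul_comm_of_disjoint_movedBy_of_mem_fixedBy {g h : G}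
    (hgh : Disjoint (fixedBy α g)ᶜ (fixedBy α h)ᶜ) {x : α} (hx : x ∈ fixedBy α g) :
    g • h • x = h • g • x := by
  rw [mem_fixedBy] at hx
  rw [hx]
  by_contra hmoved
  have hfixed : h • x ∈ fixedBy α h := not_not.mp (Set.disjoint_left.mp hgh hmoved)
  rw [smul_mem_fixedBy_iff_mem_fixedBy, mem_fixedBy] at hfixed
  rw [hfixed, hx] at hmoved
  exact hmoved rfl

theorem commute_of_disjoint_movedBy [FaithfulSMul G α] {g h : G}
    (hgh : Disjoint (fixedBy α g)ᶜ (fixedBy α h)ᶜ) : Commute g h := by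
  refine eq_of_smul_eq_smul (α := α) fun x => ?_
  rw [mul_smul, mul_smul]
  by_cases hx : x ∈ fixedBy α g
  · exact smul_smul_comm_of_disjoint_movedBy_of_mem_fixedBy hgh hx
  · have hx' : x ∈ fixedBy α h := not_not.mp (Set.disjoint_left.mp hgh hx)
    exact (smul_smul_comm_of_disjoint_movedBy_of_mem_fixedBy hgh.symm hx').symm

theorem commute_conj_of_movedBy_subset [FaithfulSMul G α] {V : Set α} {g a c : G}
    (hgV : Disjoint (g • V) V) (ha : (fixedBy α a)ᶜ ⊆ V) (hc : (fixedBy α c)ᶜ ⊆ V) :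
    Commute (g * a * g⁻¹) c := by
  refine commute_of_disjoint_movedBy (α := α) ?_
  rw [← smul_fixedBy, ← Set.smul_set_compl]
  exact hgV.mono (Set.smul_set_mono ha) hc

end DisjointSupports

/-- Key step of the simplicity proof: if `N ⊴ G`, `g ∈ N`, and `g(V) ∩ V = ∅`, then every
commutator of elements of `G` supported in `V` lies in `N`. -/
theorem stmt_7 {X : Type*} (G : Subgroup (Equiv.Perm X))
    (N : Subgroup G) (hN : N.Normal) (g : G) (hgN : g ∈ N)
    (V : Set X) (hgV : (g : Equiv.Perm X) '' V ∩ V = ∅)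
    (a b : G)
    (ha : {x | (a : Equiv.Perm X) x ≠ x} ⊆ V)
    (hb : {x | (b : Equiv.Perm X) x ≠ x} ⊆ V) :
    ⁅a, b⁆ ∈ N := by
  have ha' : a ∈ fixingSubgroup G Vᶜ := (mem_fixingSubgroup_compl_iff_movedBy_subset G).mpr ha
  have hb' : b ∈ fixingSubgroup G Vᶜ := (mem_fixingSubgroup_compl_iff_movedBy_subset G).mpr hb
  have hconj : a⁻¹ * b * a ∈ fixingSubgroup G Vᶜ := mul_mem (mul_mem (inv_mem ha') hb') ha'
  exact commutatorElement_mem_of_commute_conj hN hgN <|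
    commute_conj_of_movedBy_subset (Set.disjoint_iff_inter_eq_empty.mpr hgV) ha
      ((mem_fixingSubgroup_compl_iff_movedBy_subset G).mp hconj)
end

section
/- In the Cantor-set model, the composition of the baker's map supported on the cylinder A = [0] (acting in the first coordinate) with a suitable transposition of cylinders equals the product of two baker's maps supported respectively on the left half [00] and right half [01] of A. Formally: there exist a transposition τ of disjoint cylinder sets in C × C and baker's maps β_L, β_R with supports [00] × C and [01] × C such that β_A = τ ∘ (β_L ∘ β_R), where β_A is the baker's map with support [0] × C. -/
/-- The Cantor set, modeled as infinite binary sequences. -/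
abbrev C := ℕ → Bool

def shift (x : C) : C := fun n => x (n + 1)

def prepend (b : Bool) (y : C) : C
  | 0 => b
  | n + 1 => y n

/-- Concatenate a finite binary word with an infinite binary sequence. -/
def cat (u : List Bool) (w : C) : C := fun n =>
  if h : n < u.length then u.get ⟨n, h⟩ else w (n - u.length)

/-- The cylinder of all infinite sequences with prefix `u`. -/
def cyl (u : List Bool) : Set C := Set.range (cat u)

/-- `φ` is the baker's map supported on the cylinder set `[u] × [v]`: on that cylinder it
moves the first digit after `u` of the first coordinate to just after `v` in the second
coordinate, and it is the identity elsewhere. -/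
def IsBaker (u v : List Bool) (φ : Equiv.Perm (C × C)) : Prop :=
  (∀ w w' : C, φ (cat u w, cat v w') = (cat u (shift w), cat v (prepend (w 0) w'))) ∧
  ∀ p : C × C, p ∉ cyl u ×ˢ cyl v → φ p = p

/-- `φ` is a transposition of two disjoint cylinder sets in `C × C`: it swaps them by
prefix replacement and fixes everything else. -/
def IsCylTransposition (φ : Equiv.Perm (C × C)) : Prop :=
  ∃ u v u' v' : List Bool,
    (cyl u ×ˢ cyl v) ∩ (cyl u' ×ˢ cyl v') = ∅ ∧
    (∀ w w' : C, φ (cat u w, cat v w') = (cat u' w, cat v' w')) ∧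
    (∀ w w' : C, φ (cat u' w, cat v' w') = (cat u w, cat v w')) ∧
    ∀ p : C × C, p ∉ (cyl u ×ˢ cyl v) ∪ (cyl u' ×ˢ cyl v') → φ p = p

/-! The transposition is forced: take `τ := β * (βL * βR)⁻¹`. On `[0] × C` this map exchanges
the second digit of the first coordinate with the first digit of the second one,
`(0 c x, b y) ↦ (0 b x, c y)`, and off `[0] × C` all three maps are the identity; so `τ` swaps
`[01] × [0]` with `[00] × [1]` and fixes everything else. Baker's maps with any support exist:
extend the standard baker's map `(x, y) ↦ (shift x, x₀ y)` by the identity outside the cylinder. -/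

lemma cat_nil (w : C) : cat [] w = w := by
  funext n; simp [cat]

lemma cat_cons (a : Bool) (u : List Bool) (w : C) : cat (a :: u) w = prepend a (cat u w) := by
  funext n
  cases n <;> simp [cat, prepend]

@[simp]
lemma shift_prepend (b : Bool) (x : C) : shift (prepend b x) = x := rfl

@[simp]
lemma prepend_apply_zero (b : Bool) (x : C) : prepend b x 0 = b := rfl

@[simp]
lemma prepend_zero_shift (x : C) : prepend (x 0) (shift x) = x := by
  funext n; cases n <;> rfl

lemma prepend_inj {a b : Bool} {x y : C} : prepend a x = prepend b y ↔ a = b ∧ x = y := by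
  refine ⟨fun h => ⟨congrFun h 0, congrArg shift h⟩, ?_⟩
  rintro ⟨rfl, rfl⟩
  rfl

lemma exists_eq_prepend (x : C) : ∃ a x', x = prepend a x' := ⟨x 0, shift x, by simp⟩

@[simp]
lemma mem_cyl_nil (x : C) : x ∈ cyl [] := ⟨x, cat_nil x⟩

@[simp]
lemma prepend_mem_cyl_cons_iff {a b : Bool} {x : C} {u : List Bool} :
    prepend a x ∈ cyl (b :: u) ↔ a = b ∧ x ∈ cyl u := by
  simp only [cyl, Set.mem_range, cat_cons, prepend_inj]
  constructor
  · rintro ⟨w, rfl, rfl⟩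
    exact ⟨rfl, w, rfl⟩
  · rintro ⟨rfl, w, rfl⟩
    exact ⟨w, rfl, rfl⟩

lemma cat_injective (u : List Bool) : Function.Injective (cat u) := by
  induction u with
  | nil => intro x y h; rwa [cat_nil, cat_nil] at h
  | cons a u ih => intro x y h; rw [cat_cons, cat_cons, prepend_inj] at h; exact ih h.2

def bakerMap : Equiv.Perm (C × C) where
  toFun p := (shift p.1, prepend (p.1 0) p.2)
  invFun p := (prepend (p.2 0) p.1, shift p.2)
  left_inv p := by simp
  right_inv p := by simp

theorem exists_isBaker (u v : List Bool) : ∃ φ, IsBaker u v φ := by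
  classical
  let e := Equiv.ofInjective _ ((cat_injective u).prodMap (cat_injective v))
  refine ⟨bakerMap.extendDomain e, fun w w' => ?_, fun p hp => ?_⟩
  · exact bakerMap.extendDomain_apply_image e (w, w')
  · refine Equiv.Perm.extendDomain_apply_not_subtype _ _ ?_
    rwa [Set.range_prodMap]

namespace IsBaker

variable {u v : List Bool} {φ : Equiv.Perm (C × C)}

lemma apply_cat_prepend (h : IsBaker u [] φ) (b : Bool) (w y : C) :
    φ (cat u (prepend b w), y) = (cat u w, prepend b y) := by
  simpa only [cat_nil, shift_prepend, prepend_apply_zero] using h.1 (prepend b w) y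

lemma inv_apply_cat_prepend (h : IsBaker u [] φ) (b : Bool) (w y : C) :
    φ⁻¹ (cat u w, prepend b y) = (cat u (prepend b w), y) := by
  rw [Equiv.Perm.inv_eq_iff_eq, h.apply_cat_prepend]

lemma apply_of_fst_notMem (h : IsBaker u v φ) {x : C} (hx : x ∉ cyl u) (y : C) :
    φ (x, y) = (x, y) :=
  h.2 _ fun hp => hx hp.1

lemma inv_apply_of_fst_notMem (h : IsBaker u v φ) {x : C} (hx : x ∉ cyl u) (y : C) :
    φ⁻¹ (x, y) = (x, y) := by
  rw [Equiv.Perm.inv_eq_iff_eq, h.apply_of_fst_notMem hx]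

end IsBaker

theorem isCylTransposition_of_apply_prepend {τ : Equiv.Perm (C × C)}
    (hfalse : ∀ c b x y, τ (prepend false (prepend c x), prepend b y) =
      (prepend false (prepend b x), prepend c y))
    (htrue : ∀ x y, τ (prepend true x, y) = (prepend true x, y)) : IsCylTransposition τ := by
  refine ⟨[false, true], [false], [false, false], [true], ?_, fun w w' => ?_, fun w w' => ?_, ?_⟩
  · refine Set.eq_empty_of_forall_notMem ?_
    rintro ⟨x, y⟩ ⟨⟨⟨w, rfl⟩, -⟩, hx, -⟩
    simp [cat_cons, cat_nil] at hx
  · simpa only [cat_cons, cat_nil] using hfalse true false w w'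
  · simpa only [cat_cons, cat_nil] using hfalse false true w w'
  · rintro ⟨x, y⟩ hp
    obtain ⟨a, x, rfl⟩ := exists_eq_prepend x
    cases a
    · obtain ⟨c, x, rfl⟩ := exists_eq_prepend x
      obtain ⟨b, y, rfl⟩ := exists_eq_prepend y
      rw [hfalse]
      cases b <;> cases c <;> simp_all
    · exact htrue x y

section

variable {β βL βR : Equiv.Perm (C × C)}

lemma mul_inv_apply_prepend_false (hβ : IsBaker [false] [] β)
    (hL : IsBaker [false, false] [] βL) (hR : IsBaker [false, true] [] βR) (c b : Bool) (x y : C) :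
    (β * (βL * βR)⁻¹) (prepend false (prepend c x), prepend b y) =
      (prepend false (prepend b x), prepend c y) := by
  have hβ' := hβ.apply_cat_prepend
  have hL' := hL.inv_apply_cat_prepend
  have hR' := hR.inv_apply_cat_prepend
  simp only [cat_cons, cat_nil] at hβ' hL' hR'
  simp only [mul_inv_rev, Equiv.Perm.mul_apply]
  cases c
  · rw [hL', hR.inv_apply_of_fst_notMem (by simp), hβ']
  · rw [hL.inv_apply_of_fst_notMem (by simp), hR', hβ']

lemma mul_inv_apply_prepend_true (hβ : IsBaker [false] [] β)
    (hL : IsBaker [false, false] [] βL) (hR : IsBaker [false, true] [] βR) (x y : C) :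
    (β * (βL * βR)⁻¹) (prepend true x, y) = (prepend true x, y) := by
  simp only [mul_inv_rev, Equiv.Perm.mul_apply]
  rw [hL.inv_apply_of_fst_notMem (by simp), hR.inv_apply_of_fst_notMem (by simp),
    hβ.apply_of_fst_notMem (by simp)]

end

/-- Step 1 of Brin's lemma: the baker's map supported on `[0] × C` is, modulo a
transposition, the product of the baker's maps supported on `[00] × C` and `[01] × C`. -/
theorem stmt_8 (β : Equiv.Perm (C × C)) (hβ : IsBaker [false] [] β) :
    ∃ τ βL βR : Equiv.Perm (C × C),
      IsCylTransposition τ ∧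
      IsBaker [false, false] [] βL ∧
      IsBaker [false, true] [] βR ∧
      β = τ * (βL * βR) := by
  obtain ⟨βL, hL⟩ := exists_isBaker [false, false] []
  obtain ⟨βR, hR⟩ := exists_isBaker [false, true] []
  refine ⟨β * (βL * βR)⁻¹, βL, βR, ?_, hL, hR, (inv_mul_cancel_right β _).symm⟩
  exact isCylTransposition_of_apply_prepend (mul_inv_apply_prepend_false hβ hL hR)
    (mul_inv_apply_prepend_true hβ hL hR)
end

section
/- Every baker's map whose support is a cylinder set [u] × [v] in C × C with both |u| ≥ 1 and the cylinder not equal to all of C × C is a product of finitely many transpositions of disjoint cylinder sets. -/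
namespace SA

attribute [local instance] Classical.propDecidable

def pref (p : List Bool) (x : C) : Prop := ∀ i, ∀ h : i < p.length, x i = p.get ⟨i, h⟩

def rest (p : List Bool) (x : C) : C := fun n => x (n + p.length)

lemma prepend_zero (b : Bool) (y : C) : prepend b y 0 = b := rfl

lemma prepend_succ (b : Bool) (y : C) (n : ℕ) : prepend b y (n+1) = y n := rfl

lemma shift_prepend (b : Bool) (y : C) : shift (prepend b y) = y := funext fun n => rfl

lemma prepend_shift (w : C) : prepend (w 0) (shift w) = w := by
  funext n; cases n with
  | zero => rfl
  | succ n => rfl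

lemma pref_cat (p : List Bool) (w : C) : pref p (cat p w) := by
  intro i h; simp [cat, h]

lemma rest_cat (p : List Bool) (w : C) : rest p (cat p w) = w := by
  funext n
  simp only [rest, cat]
  rw [dif_neg (by omega)]
  congr 1; omega

lemma cat_rest {p : List Bool} {x : C} (h : pref p x) : cat p (rest p x) = x := by
  funext n
  simp only [cat, rest]
  by_cases hn : n < p.length
  · rw [dif_pos hn]; exact (h n hn).symm
  · rw [dif_neg hn]; congr 1; omega

lemma cat_len (p : List Bool) (w : C) : cat p w p.length = w 0 := by
  simp [cat]

lemma cat_append (p : List Bool) (b : Bool) (w : C) :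
    cat (p ++ [b]) w = cat p (prepend b w) := by
  funext n
  simp only [cat, List.length_append, List.length_cons, List.length_nil]
  rcases lt_trichotomy n p.length with h | h | h
  · rw [dif_pos (by omega), dif_pos h]
    simp only [List.get_eq_getElem]
    exact List.getElem_append_left h
  · subst h
    rw [dif_pos (by omega), dif_neg (by omega)]
    simp [prepend_zero]
  · rw [dif_neg (by omega), dif_neg (by omega)]
    obtain ⟨k, rfl⟩ : ∃ k, n = p.length + 1 + k := ⟨n - p.length - 1, by omega⟩
    have e1 : p.length + 1 + k - (p.length + 1) = k := by omega
    have e2 : p.length + 1 + k - p.length = k + 1 := by omega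
    rw [e1, e2, prepend_succ]

lemma pref_append_iff {p : List Bool} {b : Bool} {x : C} :
    pref (p ++ [b]) x ↔ pref p x ∧ x p.length = b := by
  constructor
  · intro h
    refine ⟨fun i hi => ?_, ?_⟩
    · have := h i (by simp; omega)
      simp only [List.get_eq_getElem] at this ⊢
      rwa [List.getElem_append_left (by simpa using hi)] at this
    · have := h p.length (by simp)
      simpa using this
  · rintro ⟨h1, h2⟩ i hi
    simp only [List.length_append, List.length_cons, List.length_nil] at hi
    by_cases hlt : i < p.length
    · simp only [List.get_eq_getElem]
      rw [List.getElem_append_left hlt]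
      simpa using h1 i hlt
    · have : i = p.length := by omega
      subst this
      simpa using h2

lemma pref_of_append {p : List Bool} {b : Bool} {x : C} (h : pref (p ++ [b]) x) :
    pref p x := (pref_append_iff.1 h).1

lemma apply_len_of_pref_append {p : List Bool} {b : Bool} {x : C} (h : pref (p ++ [b]) x) :
    x p.length = b := (pref_append_iff.1 h).2

lemma sib_not {p : List Bool} {b b' : Bool} (hne : b ≠ b') {x : C}
    (h1 : pref (p ++ [b]) x) (h2 : pref (p ++ [b']) x) : False :=
  hne ((apply_len_of_pref_append h1).symm.trans (apply_len_of_pref_append h2))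

lemma mem_cyl {p : List Bool} {x : C} : x ∈ cyl p ↔ pref p x := by
  constructor
  · rintro ⟨w, rfl⟩; exact pref_cat p w
  · intro h; exact ⟨rest p x, cat_rest h⟩

end SA

namespace SA

attribute [local instance] Classical.propDecidable

section defsT

variable (p q p' q' : List Bool)

def Disj : Prop := ∀ x y : C, ¬(pref p x ∧ pref q y ∧ pref p' x ∧ pref q' y)

noncomputable def swapFun : C × C → C × C := fun z =>
  if pref p z.1 ∧ pref q z.2 then (cat p' (rest p z.1), cat q' (rest q z.2))
  else if pref p' z.1 ∧ pref q' z.2 then (cat p (rest p' z.1), cat q (rest q' z.2))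
  else z

variable {p q p' q'}

lemma swapFun_cat_left (w s : C) :
    swapFun p q p' q' (cat p w, cat q s) = (cat p' w, cat q' s) := by
  simp only [swapFun]
  rw [if_pos ⟨pref_cat p w, pref_cat q s⟩, rest_cat, rest_cat]

lemma swapFun_cat_right (h : Disj p q p' q') (w s : C) :
    swapFun p q p' q' (cat p' w, cat q' s) = (cat p w, cat q s) := by
  simp only [swapFun]
  rw [if_neg (fun hh => h _ _ ⟨hh.1, hh.2, pref_cat p' w, pref_cat q' s⟩),
    if_pos ⟨pref_cat p' w, pref_cat q' s⟩, rest_cat, rest_cat]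

lemma swapFun_out {x y : C} (h1 : ¬(pref p x ∧ pref q y)) (h2 : ¬(pref p' x ∧ pref q' y)) :
    swapFun p q p' q' (x, y) = (x, y) := by
  simp only [swapFun]
  rw [if_neg h1, if_neg h2]

lemma swapFun_involutive (h : Disj p q p' q') :
    Function.Involutive (swapFun p q p' q') := by
  rintro ⟨x, y⟩
  by_cases h1 : pref p x ∧ pref q y
  · have e1 : swapFun p q p' q' (x, y) = (cat p' (rest p x), cat q' (rest q y)) := by
      simp only [swapFun]; rw [if_pos h1]
    rw [e1, swapFun_cat_right h, cat_rest h1.1, cat_rest h1.2]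
  · by_cases h2 : pref p' x ∧ pref q' y
    · have e1 : swapFun p q p' q' (x, y) = (cat p (rest p' x), cat q (rest q' y)) := by
        simp only [swapFun]; rw [if_neg h1, if_pos h2]
      rw [e1, swapFun_cat_left, cat_rest h2.1, cat_rest h2.2]
    · rw [swapFun_out h1 h2, swapFun_out h1 h2]

noncomputable def T (h : Disj p q p' q') : Equiv.Perm (C × C) :=
  (swapFun_involutive h).toPerm

lemma T_left (h : Disj p q p' q') (w s : C) :
    T h (cat p w, cat q s) = (cat p' w, cat q' s) := swapFun_cat_left w s

lemma T_right (h : Disj p q p' q') (w s : C) :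
    T h (cat p' w, cat q' s) = (cat p w, cat q s) := swapFun_cat_right h w s

lemma T_out (h : Disj p q p' q') {x y : C} (h1 : ¬(pref p x ∧ pref q y))
    (h2 : ¬(pref p' x ∧ pref q' y)) : T h (x, y) = (x, y) := swapFun_out h1 h2

lemma T_inv (h : Disj p q p' q') : (T h)⁻¹ = T h := Equiv.ext fun _ => rfl

lemma isT (h : Disj p q p' q') : IsCylTransposition (T h) := by
  refine ⟨p, q, p', q', ?_, T_left h, T_right h, ?_⟩
  · ext ⟨x, y⟩
    simp only [Set.mem_inter_iff, Set.mem_prod, mem_cyl, Set.mem_empty_iff_false, iff_false]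
    rintro ⟨⟨h1, h2⟩, ⟨h3, h4⟩⟩
    exact h x y ⟨h1, h2, h3, h4⟩
  · rintro ⟨x, y⟩ hp
    simp only [Set.mem_union, Set.mem_prod, mem_cyl, not_or] at hp
    exact T_out h hp.1 hp.2

end defsT

section bakdef

variable (p q : List Bool)

noncomputable def bakFun : C × C → C × C := fun z =>
  if pref p z.1 ∧ pref q z.2 then
    (cat p (shift (rest p z.1)), cat q (prepend (rest p z.1 0) (rest q z.2)))
  else z

noncomputable def bakInvFun : C × C → C × C := fun z =>
  if pref p z.1 ∧ pref q z.2 then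
    (cat p (prepend (rest q z.2 0) (rest p z.1)), cat q (shift (rest q z.2)))
  else z

noncomputable def bak : Equiv.Perm (C × C) where
  toFun := bakFun p q
  invFun := bakInvFun p q
  left_inv := by
    rintro ⟨x, y⟩
    by_cases h : pref p x ∧ pref q y
    · have e1 : bakFun p q (x, y) =
          (cat p (shift (rest p x)), cat q (prepend (rest p x 0) (rest q y))) := by
        simp only [bakFun]; rw [if_pos h]
      rw [e1]
      simp only [bakInvFun]
      rw [if_pos ⟨pref_cat _ _, pref_cat _ _⟩, rest_cat, rest_cat]
      rw [shift_prepend, prepend_zero, prepend_shift, cat_rest h.1, cat_rest h.2]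
    · have e1 : bakFun p q (x, y) = (x, y) := by simp only [bakFun]; rw [if_neg h]
      rw [e1]; simp only [bakInvFun]; rw [if_neg h]
  right_inv := by
    rintro ⟨x, y⟩
    by_cases h : pref p x ∧ pref q y
    · have e1 : bakInvFun p q (x, y) =
          (cat p (prepend (rest q y 0) (rest p x)), cat q (shift (rest q y))) := by
        simp only [bakInvFun]; rw [if_pos h]
      rw [e1]
      simp only [bakFun]
      rw [if_pos ⟨pref_cat _ _, pref_cat _ _⟩, rest_cat, rest_cat]
      rw [shift_prepend, prepend_zero, prepend_shift, cat_rest h.1, cat_rest h.2]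
    · have e1 : bakInvFun p q (x, y) = (x, y) := by simp only [bakInvFun]; rw [if_neg h]
      rw [e1]; simp only [bakFun]; rw [if_neg h]

variable {p q}

lemma bak_cat (w s : C) :
    bak p q (cat p w, cat q s) = (cat p (shift w), cat q (prepend (w 0) s)) := by
  show bakFun p q _ = _
  simp only [bakFun]
  rw [if_pos ⟨pref_cat _ _, pref_cat _ _⟩, rest_cat, rest_cat]

lemma bak_out {x y : C} (h : ¬(pref p x ∧ pref q y)) : bak p q (x, y) = (x, y) := by
  show bakFun p q _ = _
  simp only [bakFun]; rw [if_neg h]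

end bakdef

end SA

namespace SA

lemma prepend_eq (w : C) {b : Bool} (hb : w 0 = b) : prepend b (shift w) = w := by
  rw [← hb, prepend_shift]

lemma cat_split (p : List Bool) (w : C) : cat p w = cat (p ++ [w 0]) (shift w) := by
  rw [cat_append, prepend_shift]

lemma not_pref_sib {p : List Bool} {b b' : Bool} (hne : b ≠ b') (t : C) :
    ¬ pref (p ++ [b]) (cat (p ++ [b']) t) := fun h => sib_not hne h (pref_cat _ t)

lemma not_pref_sib₂ {q : List Bool} {a a' b b' : Bool} (hne : a ≠ a') (t : C) :
    ¬ pref ((q ++ [a]) ++ [b]) (cat ((q ++ [a']) ++ [b']) t) := by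
  intro h
  have h1 : pref (q ++ [a]) (cat ((q ++ [a']) ++ [b']) t) := pref_of_append h
  rw [cat_append] at h1
  exact not_pref_sib hne _ h1

lemma disjH (p q : List Bool) :
    Disj (p ++ [false]) (q ++ [true]) (p ++ [true]) (q ++ [false]) :=
  fun _ _ hh => sib_not (by simp) hh.1 hh.2.2.1

lemma disjV (p q : List Bool) :
    Disj p ((q ++ [false]) ++ [true]) p ((q ++ [true]) ++ [false]) :=
  fun _ _ hh => sib_not (by simp) (pref_of_append hh.2.1) (pref_of_append hh.2.2.2)

lemma disjT1 {p q p' q' : List Bool} (h : Disj p q p' q') :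
    Disj p (q ++ [false]) (p' ++ [false]) q' :=
  fun x y hh => h x y ⟨hh.1, pref_of_append hh.2.1, pref_of_append hh.2.2.1, hh.2.2.2⟩

lemma disjT2 {p q p' q' : List Bool} (h : Disj p q p' q') :
    Disj p (q ++ [true]) (p' ++ [true]) q' :=
  fun x y hh => h x y ⟨hh.1, pref_of_append hh.2.1, pref_of_append hh.2.2.1, hh.2.2.2⟩

lemma masterH (p q : List Bool) :
    bak p q = T (disjH p q) * bak (p ++ [false]) q * bak (p ++ [true]) q := by
  apply Equiv.ext
  rintro ⟨x, y⟩
  simp only [Equiv.Perm.mul_apply]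
  by_cases h : pref p x ∧ pref q y
  · obtain ⟨hx, hy⟩ := h
    obtain ⟨w, rfl⟩ : ∃ w, x = cat p w := ⟨rest p x, (cat_rest hx).symm⟩
    obtain ⟨s, rfl⟩ : ∃ s, y = cat q s := ⟨rest q y, (cat_rest hy).symm⟩
    rw [bak_cat, cat_split p w]
    cases hw : w 0
    · -- w 0 = false
      have o1 : bak (p ++ [true]) q (cat (p ++ [false]) (shift w), cat q s)
          = (cat (p ++ [false]) (shift w), cat q s) :=
        bak_out (fun hh => not_pref_sib (by simp) _ hh.1)
      rw [o1, bak_cat]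
      cases hw2 : shift w 0
      · rw [← cat_append q false s]
        have o2 : T (disjH p q)
            (cat (p ++ [false]) (shift (shift w)), cat (q ++ [false]) s)
            = (cat (p ++ [false]) (shift (shift w)), cat (q ++ [false]) s) :=
          T_out _ (fun hh => not_pref_sib (by simp) _ hh.2)
            (fun hh => not_pref_sib (by simp) _ hh.1)
        rw [o2, cat_append p false, prepend_eq (shift w) hw2]
      · rw [← cat_append q true s, T_left, cat_append p true,
          prepend_eq (shift w) hw2, cat_append q false]
    · -- w 0 = true
      rw [bak_cat]
      have o1 : bak (p ++ [false]) q
          (cat (p ++ [true]) (shift (shift w)), cat q (prepend (shift w 0) s))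
          = (cat (p ++ [true]) (shift (shift w)), cat q (prepend (shift w 0) s)) :=
        bak_out (fun hh => not_pref_sib (by simp) _ hh.1)
      rw [o1]
      cases hw2 : shift w 0
      · rw [← cat_append q false s, T_right, cat_append p false,
          prepend_eq (shift w) hw2, cat_append q true]
      · rw [← cat_append q true s]
        have o2 : T (disjH p q)
            (cat (p ++ [true]) (shift (shift w)), cat (q ++ [true]) s)
            = (cat (p ++ [true]) (shift (shift w)), cat (q ++ [true]) s) :=
          T_out _ (fun hh => not_pref_sib (by simp) _ hh.1)
            (fun hh => not_pref_sib (by simp) _ hh.2)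
        rw [o2, cat_append p true, prepend_eq (shift w) hw2]
  · have o1 : bak (p ++ [true]) q (x, y) = (x, y) :=
      bak_out (fun hh => h ⟨pref_of_append hh.1, hh.2⟩)
    have o2 : bak (p ++ [false]) q (x, y) = (x, y) :=
      bak_out (fun hh => h ⟨pref_of_append hh.1, hh.2⟩)
    have o3 : T (disjH p q) (x, y) = (x, y) :=
      T_out _ (fun hh => h ⟨pref_of_append hh.1, pref_of_append hh.2⟩)
        (fun hh => h ⟨pref_of_append hh.1, pref_of_append hh.2⟩)
    rw [o1, o2, o3, bak_out h]

lemma masterV (p q : List Bool) :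
    bak p q = T (disjV p q) * bak p (q ++ [false]) * bak p (q ++ [true]) := by
  apply Equiv.ext
  rintro ⟨x, y⟩
  simp only [Equiv.Perm.mul_apply]
  by_cases h : pref p x ∧ pref q y
  · obtain ⟨hx, hy⟩ := h
    obtain ⟨w, rfl⟩ : ∃ w, x = cat p w := ⟨rest p x, (cat_rest hx).symm⟩
    obtain ⟨s, rfl⟩ : ∃ s, y = cat q s := ⟨rest q y, (cat_rest hy).symm⟩
    rw [bak_cat, cat_split q s]
    cases hs : s 0
    · -- s 0 = false
      have o1 : bak p (q ++ [true]) (cat p w, cat (q ++ [false]) (shift s))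
          = (cat p w, cat (q ++ [false]) (shift s)) :=
        bak_out (fun hh => not_pref_sib (by simp) _ hh.2)
      rw [o1, bak_cat]
      cases hw : w 0
      · rw [← cat_append (q ++ [false]) false (shift s)]
        have o2 : T (disjV p q)
            (cat p (shift w), cat ((q ++ [false]) ++ [false]) (shift s))
            = (cat p (shift w), cat ((q ++ [false]) ++ [false]) (shift s)) :=
          T_out _ (fun hh => not_pref_sib (by simp) _ hh.2)
            (fun hh => not_pref_sib₂ (by simp) _ hh.2)
        rw [o2, cat_append (q ++ [false]) false, prepend_eq s hs, cat_append q false]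
      · rw [← cat_append (q ++ [false]) true (shift s), T_left,
          cat_append (q ++ [true]) false, prepend_eq s hs, cat_append q true]
    · -- s 0 = true
      rw [bak_cat]
      have o1 : bak p (q ++ [false])
          (cat p (shift w), cat (q ++ [true]) (prepend (w 0) (shift s)))
          = (cat p (shift w), cat (q ++ [true]) (prepend (w 0) (shift s))) :=
        bak_out (fun hh => not_pref_sib (by simp) _ hh.2)
      rw [o1]
      cases hw : w 0
      · rw [← cat_append (q ++ [true]) false (shift s), T_right,
          cat_append (q ++ [false]) true, prepend_eq s hs, cat_append q false]
      · rw [← cat_append (q ++ [true]) true (shift s)]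
        have o2 : T (disjV p q)
            (cat p (shift w), cat ((q ++ [true]) ++ [true]) (shift s))
            = (cat p (shift w), cat ((q ++ [true]) ++ [true]) (shift s)) :=
          T_out _ (fun hh => not_pref_sib₂ (by simp) _ hh.2)
            (fun hh => not_pref_sib (by simp) _ hh.2)
        rw [o2, cat_append (q ++ [true]) true, prepend_eq s hs, cat_append q true]
  · have o1 : bak p (q ++ [true]) (x, y) = (x, y) :=
      bak_out (fun hh => h ⟨hh.1, pref_of_append hh.2⟩)
    have o2 : bak p (q ++ [false]) (x, y) = (x, y) :=
      bak_out (fun hh => h ⟨hh.1, pref_of_append hh.2⟩)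
    have o3 : T (disjV p q) (x, y) = (x, y) :=
      T_out _ (fun hh => h ⟨hh.1, pref_of_append (pref_of_append hh.2)⟩)
        (fun hh => h ⟨hh.1, pref_of_append (pref_of_append hh.2)⟩)
    rw [o1, o2, o3, bak_out h]

lemma ratio {p q p' q' : List Bool} (h : Disj p q p' q') :
    bak p q = T (disjT1 h) * T (disjT2 h) * T h * bak p' q' := by
  apply Equiv.ext
  rintro ⟨x, y⟩
  simp only [Equiv.Perm.mul_apply]
  by_cases hX : pref p x ∧ pref q y
  · obtain ⟨hx, hy⟩ := hX
    obtain ⟨w, rfl⟩ : ∃ w, x = cat p w := ⟨rest p x, (cat_rest hx).symm⟩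
    obtain ⟨s, rfl⟩ : ∃ s, y = cat q s := ⟨rest q y, (cat_rest hy).symm⟩
    have o1 : bak p' q' (cat p w, cat q s) = (cat p w, cat q s) :=
      bak_out (fun hh => h _ _ ⟨pref_cat _ _, pref_cat _ _, hh.1, hh.2⟩)
    rw [bak_cat, o1, T_left h w s, cat_split p' w]
    cases hw : w 0
    · -- w 0 = false : T2 out, T1 fires (right)
      have o2 : T (disjT2 h) (cat (p' ++ [false]) (shift w), cat q' s)
          = (cat (p' ++ [false]) (shift w), cat q' s) :=
        T_out _
          (fun hh => h _ _ ⟨hh.1, pref_of_append hh.2, pref_of_append (pref_cat _ _),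
            pref_cat _ _⟩)
          (fun hh => not_pref_sib (by simp) _ hh.1)
      rw [o2, T_right (disjT1 h) (shift w) s, cat_append q false]
    · -- w 0 = true : T2 fires (right), T1 out
      rw [T_right (disjT2 h) (shift w) s]
      have o3 : T (disjT1 h) (cat p (shift w), cat (q ++ [true]) s)
          = (cat p (shift w), cat (q ++ [true]) s) :=
        T_out _ (fun hh => not_pref_sib (by simp) _ hh.2)
          (fun hh => h _ _ ⟨pref_cat _ _, pref_of_append (pref_cat _ _),
            pref_of_append hh.1, hh.2⟩)
      rw [o3, cat_append q true]
  · by_cases hY : pref p' x ∧ pref q' y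
    · obtain ⟨hx, hy⟩ := hY
      obtain ⟨w, rfl⟩ : ∃ w, x = cat p' w := ⟨rest p' x, (cat_rest hx).symm⟩
      obtain ⟨s, rfl⟩ : ∃ s, y = cat q' s := ⟨rest q' y, (cat_rest hy).symm⟩
      rw [bak_out hX, bak_cat, T_right h (shift w) (prepend (w 0) s)]
      cases hw : w 0
      · -- w 0 = false : T2 out, T1 left
        rw [← cat_append q false s]
        have o2 : T (disjT2 h) (cat p (shift w), cat (q ++ [false]) s)
            = (cat p (shift w), cat (q ++ [false]) s) :=
          T_out _ (fun hh => not_pref_sib (by simp) _ hh.2)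
            (fun hh => h _ _ ⟨pref_cat _ _, pref_of_append (pref_cat _ _),
              pref_of_append hh.1, hh.2⟩)
        rw [o2, T_left (disjT1 h) (shift w) s, cat_append p' false, prepend_eq w hw]
      · -- w 0 = true : T2 left, T1 out
        rw [← cat_append q true s, T_left (disjT2 h) (shift w) s]
        have o3 : T (disjT1 h) (cat (p' ++ [true]) (shift w), cat q' s)
            = (cat (p' ++ [true]) (shift w), cat q' s) :=
          T_out _
            (fun hh => h _ _ ⟨hh.1, pref_of_append hh.2, pref_of_append (pref_cat _ _),
              pref_cat _ _⟩)
            (fun hh => not_pref_sib (by simp) _ hh.1)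
        rw [o3, cat_append p' true, prepend_eq w hw]
    · have o1 : bak p' q' (x, y) = (x, y) := bak_out hY
      have o2 : T h (x, y) = (x, y) := T_out _ hX hY
      have o3 : T (disjT2 h) (x, y) = (x, y) :=
        T_out _ (fun hh => hX ⟨hh.1, pref_of_append hh.2⟩)
          (fun hh => hY ⟨pref_of_append hh.1, hh.2⟩)
      have o4 : T (disjT1 h) (x, y) = (x, y) :=
        T_out _ (fun hh => hX ⟨hh.1, pref_of_append hh.2⟩)
          (fun hh => hY ⟨pref_of_append hh.1, hh.2⟩)
      rw [o1, o2, o3, o4, bak_out hX]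

end SA

namespace SA

lemma isCylTransposition_inv {τ : Equiv.Perm (C × C)} (h : IsCylTransposition τ) :
    IsCylTransposition τ⁻¹ := by
  obtain ⟨a, b, a', b', hdisj, h1, h2, h3⟩ := h
  refine ⟨a, b, a', b', hdisj, fun w s => ?_, fun w s => ?_, fun pp hp => ?_⟩
  · rw [Equiv.Perm.inv_eq_iff_eq]; exact (h2 w s).symm
  · rw [Equiv.Perm.inv_eq_iff_eq]; exact (h1 w s).symm
  · rw [Equiv.Perm.inv_eq_iff_eq]; exact (h3 pp hp).symm

def InT (φ : Equiv.Perm (C × C)) : Prop :=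
  ∃ L : List (Equiv.Perm (C × C)), (∀ τ ∈ L, IsCylTransposition τ) ∧ φ = L.prod

lemma InT.mul {φ ψ : Equiv.Perm (C × C)} (h1 : InT φ) (h2 : InT ψ) : InT (φ * ψ) := by
  obtain ⟨L1, m1, e1⟩ := h1
  obtain ⟨L2, m2, e2⟩ := h2
  refine ⟨L1 ++ L2, ?_, by rw [List.prod_append, e1, e2]⟩
  intro τ ht
  rcases List.mem_append.1 ht with hh | hh
  exacts [m1 τ hh, m2 τ hh]

lemma InT.inv {φ : Equiv.Perm (C × C)} (h : InT φ) : InT φ⁻¹ := by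
  obtain ⟨L, m, e⟩ := h
  refine ⟨(L.map (·⁻¹)).reverse, ?_, ?_⟩
  · intro τ ht
    simp only [List.mem_reverse, List.mem_map] at ht
    obtain ⟨σ, hσ, rfl⟩ := ht
    exact isCylTransposition_inv (m σ hσ)
  · rw [e, List.prod_inv_reverse]

lemma InT.ofT {p q p' q' : List Bool} (h : Disj p q p' q') : InT (T h) :=
  ⟨[T h], by simpa using isT h, by simp⟩

lemma disjSibL {z : List Bool} {b b' : Bool} (hne : b ≠ b') (q q' : List Bool) :
    Disj (z ++ [b]) q (z ++ [b']) q' := fun _ _ hh => sib_not hne hh.1 hh.2.2.1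

lemma eq_bak {u v : List Bool} {β : Equiv.Perm (C × C)}
    (h1 : ∀ w w' : C, β (cat u w, cat v w') = (cat u (shift w), cat v (prepend (w 0) w')))
    (h2 : ∀ p : C × C, p ∉ cyl u ×ˢ cyl v → β p = p) :
    β = bak u v := by
  apply Equiv.ext
  rintro ⟨x, y⟩
  by_cases h : pref u x ∧ pref v y
  · obtain ⟨hx, hy⟩ := h
    obtain ⟨w, rfl⟩ : ∃ w, x = cat u w := ⟨rest u x, (cat_rest hx).symm⟩
    obtain ⟨s, rfl⟩ : ∃ s, y = cat v s := ⟨rest v y, (cat_rest hy).symm⟩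
    rw [h1, bak_cat]
  · rw [bak_out h]
    exact h2 (x, y) (by simpa only [Set.mem_prod, mem_cyl] using h)

lemma main (u v : List Bool) : InT (bak u v) := by
  have d3 : Disj (u ++ [true]) v (u ++ [false]) (v ++ [false]) :=
    disjSibL (by simp) _ _
  have d4 : Disj (u ++ [true]) (v ++ [true]) (u ++ [false]) (v ++ [false]) :=
    disjSibL (by simp) _ _
  have d6 : Disj (u ++ [false]) (v ++ [false]) (u ++ [true]) (v ++ [false]) :=
    disjSibL (by simp) _ _
  have d7 : Disj (u ++ [false]) v (u ++ [true]) (v ++ [false]) :=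
    disjSibL (by simp) _ _
  have eA := masterH u v
  have eB := masterV (u ++ [true]) v
  have eC := ratio d3
  have eD := ratio d4
  have eE := ratio d6
  have eF := ratio d7
  have key : bak (u ++ [true]) (v ++ [false]) =
      (T (disjV (u ++ [true]) v))⁻¹ * bak (u ++ [true]) v *
        (bak (u ++ [true]) (v ++ [true]))⁻¹ := by
    rw [eB]; group
  rw [eC, eD] at key
  have key2 : bak (u ++ [true]) (v ++ [false]) =
      (T (disjV (u ++ [true]) v))⁻¹ *
        (T (disjT1 d3) * T (disjT2 d3) * T d3) *
        (T (disjT1 d4) * T (disjT2 d4) * T d4)⁻¹ := by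
    rw [key]; group
  have iB10 : InT (bak (u ++ [true]) (v ++ [false])) := by
    rw [key2]
    exact (((InT.ofT _).inv.mul (((InT.ofT _).mul (InT.ofT _)).mul (InT.ofT _))).mul
      (((InT.ofT _).mul (InT.ofT _)).mul (InT.ofT _)).inv)
  have iB00 : InT (bak (u ++ [false]) (v ++ [false])) := by
    rw [eE]
    exact (((InT.ofT _).mul (InT.ofT _)).mul (InT.ofT _)).mul iB10
  have iB0v : InT (bak (u ++ [false]) v) := by
    rw [eF]
    exact (((InT.ofT _).mul (InT.ofT _)).mul (InT.ofT _)).mul iB10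
  have iB1v : InT (bak (u ++ [true]) v) := by
    rw [eC]
    exact (((InT.ofT _).mul (InT.ofT _)).mul (InT.ofT _)).mul iB00
  rw [eA]
  exact ((InT.ofT _).mul iB0v).mul iB1v

end SA


/-- Every baker's map whose support `[u] × [v]` has `|u| ≥ 1` and is not all of `C × C`
is a product of finitely many transpositions of disjoint cylinder sets. -/
theorem stmt_10 (u v : List Bool) (hu : 1 ≤ u.length)
    (hne : cyl u ×ˢ cyl v ≠ (Set.univ : Set (C × C)))
    (β : Equiv.Perm (C × C)) (hβ : IsBaker u v β) :
    ∃ L : List (Equiv.Perm (C × C)),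
      (∀ τ ∈ L, IsCylTransposition τ) ∧ β = L.prod := by
  obtain ⟨hb1, hb2⟩ := hβ
  rw [SA.eq_bak hb1 hb2]
  obtain ⟨L, h1, h2⟩ := SA.main u v
  exact ⟨L, h1, h2⟩
end

section
/- The full (primary) baker's map on C × C is a product of finitely many transpositions of disjoint cylinder sets. -/
noncomputable section

open Equiv Set
open scoped Classical

namespace BakerMap

variable {u v u' v' p q : List Bool} {b : Bool} {x : C}

@[simp] lemma prepend_zero (b : Bool) (y : C) : prepend b y 0 = b := rfl

@[simp] lemma shift_prepend (b : Bool) (y : C) : shift (prepend b y) = y := rfl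

lemma prepend_shift (x : C) : prepend (x 0) (shift x) = x := by
  funext n; cases n <;> rfl

lemma exists_eq_prepend (x : C) : ∃ b s, x = prepend b s :=
  ⟨x 0, shift x, (prepend_shift x).symm⟩

def drop (n : ℕ) (x : C) : C := fun i => x (i + n)

@[simp] lemma drop_length_cat (u : List Bool) (w : C) : drop u.length (cat u w) = w := by
  funext n; simp [drop, cat]

@[simp] lemma drop_length_add_one_cat (u : List Bool) (w : C) :
    drop (u.length + 1) (cat u w) = shift w := by
  funext n; simp only [drop, cat, shift]; rw [dif_neg (by omega)]; congr 1; omega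

@[simp] lemma cat_apply_length (u : List Bool) (w : C) : cat u w u.length = w 0 := by
  simp [cat]

@[simp] lemma cat_append_singleton (u : List Bool) (b : Bool) (w : C) :
    cat (u ++ [b]) w = cat u (prepend b w) := by
  funext n
  simp only [cat, List.get_eq_getElem, List.length_append, List.length_singleton]
  rcases lt_trichotomy n u.length with h | rfl | h
  · simp [h, Nat.lt_succ_of_lt h, List.getElem_append_left]
  · simp [prepend]
  · rw [dif_neg (by omega), dif_neg (by omega)]
    obtain ⟨k, rfl⟩ := Nat.exists_eq_add_of_lt h
    simp [prepend, show u.length + k + 1 - u.length = k + 1 by omega]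

@[simp] lemma cat_mem_cyl (u : List Bool) (w : C) : cat u w ∈ cyl u := mem_range_self w

@[simp] lemma cat_nil (w : C) : cat [] w = w := by
  funext n; simp [cat]

@[simp] lemma drop_zero (x : C) : drop 0 x = x := rfl

@[simp] lemma cyl_nil : cyl [] = univ :=
  eq_univ_of_forall fun x => ⟨x, by funext n; simp [cat]⟩

@[simp] lemma mem_cyl_append_singleton :
    x ∈ cyl (u ++ [b]) ↔ x ∈ cyl u ∧ x u.length = b := by
  constructor
  · rintro ⟨w, rfl⟩
    simp
  · rintro ⟨⟨w, rfl⟩, hb⟩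
    rw [cat_apply_length] at hb
    exact ⟨shift w, by rw [cat_append_singleton, ← hb, prepend_shift]⟩

lemma cyl_append_singleton_subset : cyl (u ++ [b]) ⊆ cyl u := fun _ h =>
  (mem_cyl_append_singleton.mp h).1

lemma disjoint_cyl_append_singleton {b b' : Bool} (h : b ≠ b') :
    Disjoint (cyl (u ++ [b])) (cyl (u ++ [b'])) :=
  disjoint_left.mpr fun _ hb hb' => h <|
    (mem_cyl_append_singleton.mp hb).2.symm.trans (mem_cyl_append_singleton.mp hb').2

def cylSwapFun (u v u' v' : List Bool) (z : C × C) : C × C :=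
  if z ∈ cyl u ×ˢ cyl v then (cat u' (drop u.length z.1), cat v' (drop v.length z.2))
  else if z ∈ cyl u' ×ˢ cyl v' then (cat u (drop u'.length z.1), cat v (drop v'.length z.2))
  else z

lemma cylSwapFun_cat_left (w w' : C) :
    cylSwapFun u v u' v' (cat u w, cat v w') = (cat u' w, cat v' w') := by
  simp [cylSwapFun]

lemma cylSwapFun_cat_right (h : Disjoint (cyl u ×ˢ cyl v) (cyl u' ×ˢ cyl v')) (w w' : C) :
    cylSwapFun u v u' v' (cat u' w, cat v' w') = (cat u w, cat v w') := by
  rw [cylSwapFun, if_neg (disjoint_right.mp h (by simp)), if_pos (by simp)]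
  simp

lemma cylSwapFun_of_notMem {z : C × C} (hz : z ∉ cyl u ×ˢ cyl v)
    (hz' : z ∉ cyl u' ×ˢ cyl v') :
    cylSwapFun u v u' v' z = z := by
  rw [cylSwapFun, if_neg hz, if_neg hz']

lemma cylSwapFun_involutive (h : Disjoint (cyl u ×ˢ cyl v) (cyl u' ×ˢ cyl v')) :
    Function.Involutive (cylSwapFun u v u' v') := by
  rintro ⟨x, y⟩
  by_cases hz : (x, y) ∈ cyl u ×ˢ cyl v
  · obtain ⟨⟨w, rfl⟩, ⟨w', rfl⟩⟩ := hz
    rw [cylSwapFun_cat_left, cylSwapFun_cat_right h]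
  by_cases hz' : (x, y) ∈ cyl u' ×ˢ cyl v'
  · obtain ⟨⟨w, rfl⟩, ⟨w', rfl⟩⟩ := hz'
    rw [cylSwapFun_cat_right h, cylSwapFun_cat_left]
  · rw [cylSwapFun_of_notMem hz hz', cylSwapFun_of_notMem hz hz']

def cylSwap (u v u' v' : List Bool) (h : Disjoint (cyl u ×ˢ cyl v) (cyl u' ×ˢ cyl v')) :
    Perm (C × C) :=
  (cylSwapFun_involutive h).toPerm

lemma cylSwap_apply (h : Disjoint (cyl u ×ˢ cyl v) (cyl u' ×ˢ cyl v')) (z : C × C) :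
    cylSwap u v u' v' h z = cylSwapFun u v u' v' z := rfl

lemma isCylTransposition_cylSwap (h : Disjoint (cyl u ×ˢ cyl v) (cyl u' ×ˢ cyl v')) :
    IsCylTransposition (cylSwap u v u' v' h) :=
  ⟨u, v, u', v', disjoint_iff_inter_eq_empty.mp h, cylSwapFun_cat_left,
    cylSwapFun_cat_right h, fun _ hz => cylSwapFun_of_notMem (not_or.mp hz).1 (not_or.mp hz).2⟩

def bakerFun (u v : List Bool) (z : C × C) : C × C :=
  if z ∈ cyl u ×ˢ cyl v then
    (cat u (shift (drop u.length z.1)), cat v (prepend (drop u.length z.1 0) (drop v.length z.2)))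
  else z

def bakerInvFun (u v : List Bool) (z : C × C) : C × C :=
  if z ∈ cyl u ×ˢ cyl v then
    (cat u (prepend (drop v.length z.2 0) (drop u.length z.1)), cat v (shift (drop v.length z.2)))
  else z

def baker (u v : List Bool) : Perm (C × C) where
  toFun := bakerFun u v
  invFun := bakerInvFun u v
  left_inv := by
    rintro ⟨x, y⟩
    by_cases hz : (x, y) ∈ cyl u ×ˢ cyl v
    · obtain ⟨⟨w, rfl⟩, ⟨w', rfl⟩⟩ := hz
      simp [bakerFun, bakerInvFun, prepend_shift]
    · simp only [bakerFun, bakerInvFun, if_neg hz]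
  right_inv := by
    rintro ⟨x, y⟩
    by_cases hz : (x, y) ∈ cyl u ×ˢ cyl v
    · obtain ⟨⟨w, rfl⟩, ⟨w', rfl⟩⟩ := hz
      simp [bakerFun, bakerInvFun, prepend_shift]
    · simp only [bakerFun, bakerInvFun, if_neg hz]

lemma baker_apply (u v : List Bool) (z : C × C) : baker u v z = bakerFun u v z := rfl

lemma disjoint_prod_cyl_append_singleton {b b' : Bool} (h : b ≠ b') (v v' : List Bool) :
    Disjoint (cyl (u ++ [b]) ×ˢ cyl v) (cyl (u ++ [b']) ×ˢ cyl v') :=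
  (disjoint_cyl_append_singleton h).set_prod_left _ _

lemma baker_eq_cylSwap_mul (u v : List Bool) :
    baker u v = cylSwap (u ++ [false]) (v ++ [true]) (u ++ [true]) (v ++ [false])
        (disjoint_prod_cyl_append_singleton Bool.false_ne_true _ _) *
      baker (u ++ [false]) v * baker (u ++ [true]) v := by
  refine Equiv.ext fun ⟨x, y⟩ => ?_
  by_cases hz : (x, y) ∈ cyl u ×ˢ cyl v
  · obtain ⟨⟨w, rfl⟩, ⟨w', rfl⟩⟩ := hz
    obtain ⟨b, w, rfl⟩ := exists_eq_prepend w
    obtain ⟨c, s, rfl⟩ := exists_eq_prepend w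
    cases b <;> cases c <;> simp [baker_apply, bakerFun, cylSwap_apply, cylSwapFun]
  · rcases not_and_or.mp hz with h | h <;>
      simp [baker_apply, bakerFun, cylSwap_apply, cylSwapFun, h]

lemma cat_notMem_cyl_of_disjoint (h : Disjoint (cyl u) (cyl p)) (w : C) : cat u w ∉ cyl p :=
  disjoint_left.mp h (cat_mem_cyl u w)

lemma prod_cyl_append_singleton_subset_left (b : Bool) (u v : List Bool) :
    cyl (u ++ [b]) ×ˢ cyl v ⊆ cyl u ×ˢ cyl v :=
  prod_mono cyl_append_singleton_subset subset_rfl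

lemma prod_cyl_append_singleton_subset_right (b : Bool) (u v : List Bool) :
    cyl u ×ˢ cyl (v ++ [b]) ⊆ cyl u ×ˢ cyl v :=
  prod_mono subset_rfl cyl_append_singleton_subset

lemma disjoint_prod_cyl_append_singleton_of_disjoint
    (h : Disjoint (cyl u ×ˢ cyl v) (cyl p ×ˢ cyl q)) (b : Bool) :
    Disjoint (cyl (u ++ [b]) ×ˢ cyl v) (cyl p ×ˢ cyl (q ++ [b])) :=
  h.mono (prod_cyl_append_singleton_subset_left _ _ _)
    (prod_cyl_append_singleton_subset_right _ _ _)

lemma baker_eq_cylSwap_mul_baker (h : Disjoint (cyl u ×ˢ cyl v) (cyl p ×ˢ cyl q)) :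
    baker u v = cylSwap u v p q h *
      cylSwap (u ++ [false]) v p (q ++ [false])
        (disjoint_prod_cyl_append_singleton_of_disjoint h false) *
      cylSwap (u ++ [true]) v p (q ++ [true])
        (disjoint_prod_cyl_append_singleton_of_disjoint h true) *
      baker p q := by
  refine Equiv.ext fun ⟨x, y⟩ => ?_
  rcases disjoint_prod.mp h with hd | hd
  all_goals
    have h₁ := cat_notMem_cyl_of_disjoint hd
    have h₂ := cat_notMem_cyl_of_disjoint hd.symm
    by_cases hz : (x, y) ∈ cyl u ×ˢ cyl v
    · obtain ⟨⟨w, rfl⟩, ⟨w', rfl⟩⟩ := hz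
      obtain ⟨b, s, rfl⟩ := exists_eq_prepend w
      cases b <;> simp [baker_apply, bakerFun, cylSwap_apply, cylSwapFun, h₁, h₂]
    by_cases hz' : (x, y) ∈ cyl p ×ˢ cyl q
    · obtain ⟨⟨w, rfl⟩, ⟨w', rfl⟩⟩ := hz'
      obtain ⟨b, s, rfl⟩ := exists_eq_prepend w
      cases b <;> simp [baker_apply, bakerFun, cylSwap_apply, cylSwapFun, h₁, h₂]
    · rcases not_and_or.mp hz with h1 | h1 <;> rcases not_and_or.mp hz' with h2 | h2 <;>
        simp [baker_apply, bakerFun, cylSwap_apply, cylSwapFun, h1, h2]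

lemma _root_.IsCylTransposition.inv {φ : Perm (C × C)} (hφ : IsCylTransposition φ) :
    IsCylTransposition φ⁻¹ := by
  obtain ⟨u, v, u', v', hd, hφ, hφ', hfix⟩ := hφ
  exact ⟨u, v, u', v', hd, fun w w' => Perm.inv_eq_iff_eq.mpr (hφ' w w').symm,
    fun w w' => Perm.inv_eq_iff_eq.mpr (hφ w w').symm,
    fun z hz => Perm.inv_eq_iff_eq.mpr (hfix z hz).symm⟩

def cylTranspositionGroup : Subgroup (Perm (C × C)) :=
  Subgroup.closure {τ | IsCylTransposition τ}

lemma exists_list_of_mem_cylTranspositionGroup {φ : Perm (C × C)}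
    (hφ : φ ∈ cylTranspositionGroup) :
    ∃ L : List (Perm (C × C)), (∀ τ ∈ L, IsCylTransposition τ) ∧ φ = L.prod := by
  have hinv : {τ | IsCylTransposition τ}⁻¹ ⊆ {τ : Perm (C × C) | IsCylTransposition τ} :=
    fun τ hτ => inv_inv τ ▸ hτ.inv
  rw [cylTranspositionGroup, ← Subgroup.mem_toSubmonoid, Subgroup.closure_toSubmonoid,
    union_eq_left.mpr hinv] at hφ
  obtain ⟨L, hL, rfl⟩ := Submonoid.exists_list_of_mem_closure hφ
  exact ⟨L, hL, rfl⟩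

lemma cylSwap_mem_cylTranspositionGroup (h : Disjoint (cyl u ×ˢ cyl v) (cyl u' ×ˢ cyl v')) :
    cylSwap u v u' v' h ∈ cylTranspositionGroup :=
  Subgroup.subset_closure (isCylTransposition_cylSwap h)

lemma baker_mul_inv_mem_cylTranspositionGroup (h : Disjoint (cyl u ×ˢ cyl v) (cyl p ×ˢ cyl q)) :
    baker u v * (baker p q)⁻¹ ∈ cylTranspositionGroup := by
  rw [baker_eq_cylSwap_mul_baker h, mul_inv_cancel_right]
  exact mul_mem (mul_mem (cylSwap_mem_cylTranspositionGroup _)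
    (cylSwap_mem_cylTranspositionGroup _)) (cylSwap_mem_cylTranspositionGroup _)

lemma baker_mem_of_append_false_mem (h : baker (u ++ [false]) v ∈ cylTranspositionGroup) :
    baker u v ∈ cylTranspositionGroup := by
  have h₁ : baker (u ++ [true]) v ∈ cylTranspositionGroup := by
    simpa using mul_mem (baker_mul_inv_mem_cylTranspositionGroup
      (disjoint_prod_cyl_append_singleton (u := u) Bool.false_ne_true.symm v v)) h
  rw [baker_eq_cylSwap_mul]
  exact mul_mem (mul_mem (cylSwap_mem_cylTranspositionGroup _) h) h₁

lemma baker_append_false_mem (h : Disjoint (cyl u ×ˢ cyl v) (cyl p ×ˢ cyl q)) :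
    baker (u ++ [false]) v ∈ cylTranspositionGroup := by
  obtain ⟨τ, hτ, hsplit⟩ : ∃ τ ∈ cylTranspositionGroup,
      baker u v = τ * baker (u ++ [false]) v * baker (u ++ [true]) v :=
    ⟨_, cylSwap_mem_cylTranspositionGroup _, baker_eq_cylSwap_mul u v⟩
  have key : baker u v * (baker p q)⁻¹ * (baker (u ++ [true]) v * (baker p q)⁻¹)⁻¹ =
      τ * baker (u ++ [false]) v := by
    rw [hsplit]; group
  rw [← Subgroup.mul_mem_cancel_left _ hτ, ← key]
  exact mul_mem (baker_mul_inv_mem_cylTranspositionGroup h) (inv_mem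
    (baker_mul_inv_mem_cylTranspositionGroup
      (h.mono_left (prod_cyl_append_singleton_subset_left _ _ _))))

lemma baker_mem_of_disjoint (h : Disjoint (cyl u ×ˢ cyl v) (cyl p ×ˢ cyl q)) :
    baker u v ∈ cylTranspositionGroup :=
  baker_mem_of_append_false_mem (baker_append_false_mem h)

end BakerMap

end

open BakerMap

/-- Brin's main lemma: the primary baker's map on `C × C` is a product of finitely many
transpositions of disjoint cylinder sets. -/
theorem stmt_11 (β : Equiv.Perm (C × C))
    (hβ : ∀ x y : C, β (x, y) = (shift x, prepend (x 0) y)) :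
    ∃ L : List (Equiv.Perm (C × C)),
      (∀ τ ∈ L, IsCylTransposition τ) ∧ β = L.prod := by
  have hβ_eq : β = baker [] [] := Equiv.ext fun ⟨x, y⟩ => by
    simp [hβ, baker_apply, bakerFun]
  apply exists_list_of_mem_cylTranspositionGroup
  rw [hβ_eq]
  exact baker_mem_of_append_false_mem <|
    baker_mem_of_disjoint (disjoint_prod_cyl_append_singleton Bool.false_ne_true [] [])
end
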